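/- arXiv:2511.22372 — 6 statements merged into one kernel-verified Lean document; each statement's English description precedes it below -/
import Mathlib

section
/- Aumann's Agreeing to Disagree Theorem: Let ⟨W, (Π_i)_{i∈𝒜}, 𝓕, P⟩ be an epistemic probability model with a common prior P, assume W is countable and P(Π_i(w)) > 0 for every agent i and state w, let E ∈ 𝓕, and for each agent i let r_i ∈ [0,1]. If C({w : P_{i,w}(E) = r_i for all i ∈ 𝒜}) is nonempty, then r_i = r_j for all agents i, j ∈ 𝒜. -/
open MeasureTheory Set

/-- `Prt` is (the cell function of) a partition of `W`: every state belongs to its own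
cell, and any two states in a common cell have the same cell. -/
def IsPart {W : Type*} (Prt : W → Set W) : Prop :=
  (∀ w, w ∈ Prt w) ∧ ∀ w w', w' ∈ Prt w → Prt w' = Prt w

/-- Conditional probability `P(A | B) = P(A ∩ B) / P(B)` (as a real number;
junk value when `P(B) = 0`, i.e. when it is undefined). -/
noncomputable def condP {W : Type*} [MeasurableSpace W] (P : Measure W) (A B : Set W) : ℝ :=
  (P (A ∩ B)).toReal / (P B).toReal

/-- Posterior belief of an agent with partition `Prt` and prior `P` at state `w`:
`P_{i,w}(E) = P(E ∩ Prt(w)) / P(Prt(w))`. -/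
noncomputable def post {W : Type*} [MeasurableSpace W] (P : Measure W) (Prt : W → Set W)
    (E : Set W) (w : W) : ℝ :=
  condP P E (Prt w)

/-- `p`-belief operator: `B^p(E)` is the set of states where the posterior of `E` is
defined (i.e. `P(Prt(w)) > 0`) and is at least `p`. -/
def pBel {W : Type*} [MeasurableSpace W] (P : Measure W) (Prt : W → Set W) (p : ℝ)
    (E : Set W) : Set W :=
  {w | 0 < P (Prt w) ∧ p ≤ post P Prt E w}

/-- Mutual `p`-belief: everybody `p`-believes `E`. -/
def mutBel {W A : Type*} [MeasurableSpace W] (P : A → Measure W) (Prt : A → W → Set W)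
    (p : ℝ) (E : Set W) : Set W :=
  ⋂ i, pBel (P i) (Prt i) p E

/-- `Z` is `p`-self-evident: `Z ⊆ B_i^p(Z)` for every agent `i`. -/
def pSelfEvident {W A : Type*} [MeasurableSpace W] (P : A → Measure W) (Prt : A → W → Set W)
    (p : ℝ) (Z : Set W) : Prop :=
  ∀ i, Z ⊆ pBel (P i) (Prt i) p Z

/-- Common `p`-belief operator: `CB^p(E)` is the set of states contained in some
`p`-self-evident event included in the mutual `p`-belief of `E`. -/
def comBel {W A : Type*} [MeasurableSpace W] (P : A → Measure W) (Prt : A → W → Set W)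
    (p : ℝ) (E : Set W) : Set W :=
  {w | ∃ Z, pSelfEvident P Prt p Z ∧ w ∈ Z ∧ Z ⊆ mutBel P Prt p E}

/-- Knowledge operator: `K(E) = {w : Prt(w) ⊆ E}`. -/
def knows {W : Type*} (Prt : W → Set W) (E : Set W) : Set W := {w | Prt w ⊆ E}

/-- `Z` is self-evident: `Z ⊆ K_i(Z)` for every agent `i`. -/
def selfEvident {W A : Type*} (Prt : A → W → Set W) (Z : Set W) : Prop :=
  ∀ i, Z ⊆ knows (Prt i) Z

/-- Common knowledge operator: `C(E)` is the set of states contained in some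
self-evident event included in `E`. -/
def comKnow {W A : Type*} (Prt : A → W → Set W) (E : Set W) : Set W :=
  {w | ∃ Z, selfEvident Prt Z ∧ w ∈ Z ∧ Z ⊆ E}

/-- **Aumann's Agreeing to Disagree Theorem.** In an epistemic probability model with a
common prior `P`, countable state space, and all information cells of positive prior
probability: if it is common knowledge that the posteriors of the event `E` are
`(r i)_{i ∈ A}`, then all the `r i` coincide. -/
theorem aumann_agreement {W A : Type*} [MeasurableSpace W] [Nonempty W] [Countable W]
    [Fintype A]
    (P : Measure W) [IsProbabilityMeasure P]
    (Prt : A → W → Set W)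
    (hpart : ∀ i, IsPart (Prt i))
    (hmeas : ∀ i w, MeasurableSet (Prt i w))
    (hpos : ∀ i w, 0 < P (Prt i w))
    (E : Set W) (hE : MeasurableSet E)
    (r : A → ℝ) (hr : ∀ i, r i ∈ Icc (0 : ℝ) 1)
    (hck : (comKnow Prt {w | ∀ i, post P (Prt i) E w = r i}).Nonempty) :
    ∀ i j, r i = r j := by
  obtain ⟨w₀, Z, hse, hw₀, hZE⟩ := hck
  have key : ∀ i, (P (E ∩ Z)).toReal = r i * (P Z).toReal := by
    intro i
    set S : Set (Set W) := (Prt i) '' Z with hSdef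
    have hScount : S.Countable := (Set.to_countable Z).image _
    haveI := hScount.to_subtype
    have hZ : Z = ⋃ s : S, (s : Set W) := by
      ext x
      constructor
      · intro hx
        exact Set.mem_iUnion.2 ⟨⟨Prt i x, Set.mem_image_of_mem _ hx⟩, (hpart i).1 x⟩
      · intro hx
        obtain ⟨⟨s, w, hwZ, rfl⟩, hxs⟩ := Set.mem_iUnion.1 hx
        exact hse i hwZ hxs
    have hdisj : Pairwise (Function.onFun Disjoint (fun s : S => (s : Set W))) := by
      rintro ⟨s, w, hwZ, rfl⟩ ⟨t, w', hw'Z, rfl⟩ hst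
      refine Set.disjoint_left.2 fun x hxs hxt => ?_
      apply hst
      have h1 := (hpart i).2 w x hxs
      have h2 := (hpart i).2 w' x hxt
      exact Subtype.ext (h1.symm.trans h2)
    have hmeas' : ∀ s : S, MeasurableSet (s : Set W) := by
      rintro ⟨s, w, hwZ, rfl⟩; exact hmeas i w
    have hPZ : P Z = ∑' s : S, P (s : Set W) := by
      rw [hZ]; exact measure_iUnion hdisj hmeas'
    have hPEZ : P (E ∩ Z) = ∑' s : S, P (E ∩ (s : Set W)) := by
      rw [hZ, Set.inter_iUnion]
      exact measure_iUnion (fun a b hab => ((hdisj hab).inter_left' E).inter_right' E)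
        (fun s => hE.inter (hmeas' s))
    have hcell : ∀ s : S, (P (E ∩ (s : Set W))).toReal = r i * (P (s : Set W)).toReal := by
      rintro ⟨s, w, hwZ, rfl⟩
      have hpost := hZE hwZ i
      have hpos' : (0 : ℝ) < (P (Prt i w)).toReal :=
        ENNReal.toReal_pos (hpos i w).ne' (measure_ne_top P _)
      rw [post, condP] at hpost
      field_simp at hpost
      simpa [mul_comm] using hpost
    rw [hPEZ, hPZ, ENNReal.tsum_toReal_eq (fun s => measure_ne_top P _),
      ENNReal.tsum_toReal_eq (fun s => measure_ne_top P _)]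
    rw [tsum_congr hcell, tsum_mul_left]
  intro i j
  have hZpos : (0 : ℝ) < (P Z).toReal := by
    have hsub : Prt i w₀ ⊆ Z := hse i hw₀
    have : 0 < P Z := lt_of_lt_of_le (hpos i w₀) (measure_mono hsub)
    exact ENNReal.toReal_pos this.ne' (measure_ne_top P _)
  have := (key i).symm.trans (key j)
  exact mul_right_cancel₀ hZpos.ne' this
end

section
/- In any epistemic probability model with W countable and P_i(Π_i(w)) > 0 for every agent i and state w: for every agent i, every event E ∈ 𝓕, and every p ∈ (0,1], if B_i^p(E) ≠ ∅, then P_i(E | B_i^p(E)) ≥ p. -/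
open MeasureTheory Set

/-- In any epistemic probability model with countable state space and all information
cells of positive probability: for every agent `i`, event `E ∈ 𝓕`, and `p ∈ (0,1]`,
if `B_i^p(E)` is nonempty, then `P_i(E | B_i^p(E)) ≥ p`. -/
theorem condP_pBel_ge {W A : Type*} [MeasurableSpace W] [Nonempty W] [Countable W]
    [Fintype A]
    (P : A → Measure W) [∀ i, IsProbabilityMeasure (P i)]
    (Prt : A → W → Set W)
    (hpart : ∀ i, IsPart (Prt i))
    (hmeas : ∀ i w, MeasurableSet (Prt i w))
    (hpos : ∀ i w, 0 < P i (Prt i w))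
    (i : A) (E : Set W) (hE : MeasurableSet E)
    (p : ℝ) (hp : p ∈ Ioc (0 : ℝ) 1)
    (hne : (pBel (P i) (Prt i) p E).Nonempty) :
    p ≤ condP (P i) E (pBel (P i) (Prt i) p E) := by
  obtain ⟨hp0, hp1⟩ := hp
  set B := pBel (P i) (Prt i) p E with hBdef
  have hpart1 := (hpart i).1
  have hpart2 := (hpart i).2
  -- cells of members of B are contained in B
  have hcell : ∀ w ∈ B, Prt i w ⊆ B := by
    intro w hw x hx
    have hPx : Prt i x = Prt i w := hpart2 w x hx
    exact ⟨by rw [hPx]; exact hw.1, by show p ≤ post (P i) (Prt i) E x; unfold post; rw [hPx]; exact hw.2⟩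
  set S := (Prt i) '' B with hSdef
  have hSc : S.Countable := (B.to_countable).image _
  haveI := hSc.to_subtype
  have hUnion : B = ⋃ C : S, (C : Set W) := by
    ext x
    constructor
    · intro hx
      exact Set.mem_iUnion.2 ⟨⟨Prt i x, Set.mem_image_of_mem _ hx⟩, hpart1 x⟩
    · intro hx
      obtain ⟨⟨C, ⟨w, hwB, rfl⟩⟩, hxC⟩ := Set.mem_iUnion.1 hx
      exact hcell w hwB hxC
  have hmeasS : ∀ C : S, MeasurableSet (C : Set W) := by
    rintro ⟨C, ⟨w, _, rfl⟩⟩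
    exact hmeas i w
  have hdisjS : Pairwise fun (C D : S) => Disjoint (C : Set W) (D : Set W) := by
    rintro ⟨C, ⟨w, _, rfl⟩⟩ ⟨D, ⟨w', _, rfl⟩⟩ hne'
    rw [Set.disjoint_left]
    intro x hxC hxD
    have h1 : Prt i x = Prt i w := hpart2 w x hxC
    have h2 : Prt i x = Prt i w' := hpart2 w' x hxD
    exact hne' (Subtype.ext (h1.symm.trans h2))
  have hEB : P i (E ∩ B) = ∑' C : S, P i (E ∩ (C : Set W)) := by
    rw [hUnion, Set.inter_iUnion]
    exact measure_iUnion (fun C D h => (hdisjS h).mono inter_subset_right inter_subset_right)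
      (fun C => hE.inter (hmeasS C))
  have hPB : P i B = ∑' C : S, P i (C : Set W) := by
    rw [hUnion]
    exact measure_iUnion hdisjS hmeasS
  have hcellbound : ∀ C : S, ENNReal.ofReal p * P i (C : Set W) ≤ P i (E ∩ (C : Set W)) := by
    rintro ⟨C, ⟨w, hwB, rfl⟩⟩
    have hfin : P i (Prt i w) ≠ ⊤ := measure_ne_top _ _
    have hbpos : 0 < (P i (Prt i w)).toReal := ENNReal.toReal_pos (hwB.1).ne' hfin
    have hw2 : p ≤ (P i (E ∩ Prt i w)).toReal / (P i (Prt i w)).toReal := hwB.2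
    have hreal : p * (P i (Prt i w)).toReal ≤ (P i (E ∩ Prt i w)).toReal :=
      (le_div_iff₀ hbpos).1 hw2
    calc ENNReal.ofReal p * P i (Prt i w)
        = ENNReal.ofReal (p * (P i (Prt i w)).toReal) := by
          rw [ENNReal.ofReal_mul hp0.le, ENNReal.ofReal_toReal hfin]
      _ ≤ ENNReal.ofReal (P i (E ∩ Prt i w)).toReal := ENNReal.ofReal_le_ofReal hreal
      _ = P i (E ∩ Prt i w) := ENNReal.ofReal_toReal (measure_ne_top _ _)
  have hkey : ENNReal.ofReal p * P i B ≤ P i (E ∩ B) := by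
    rw [hEB, hPB, ← ENNReal.tsum_mul_left]
    exact ENNReal.tsum_le_tsum hcellbound
  obtain ⟨w0, hw0⟩ := hne
  have hBpos : 0 < P i B := lt_of_lt_of_le (hpos i w0) (measure_mono (hcell w0 hw0))
  have hBfin : P i B ≠ ⊤ := measure_ne_top _ _
  have hBtpos : 0 < (P i B).toReal := ENNReal.toReal_pos hBpos.ne' hBfin
  have hkeyR : p * (P i B).toReal ≤ (P i (E ∩ B)).toReal := by
    have := ENNReal.toReal_mono (measure_ne_top _ _) hkey
    rwa [ENNReal.toReal_mul, ENNReal.toReal_ofReal hp0.le] at this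
  exact (le_div_iff₀ hBtpos).2 hkeyR
end

section
/- In any epistemic probability model with W countable and P_i(Π_i(w)) > 0 for every agent i and state w: let E ∈ 𝓕, p ∈ (0,1], for each agent i let r_i ∈ [0,1], and let X = {w : P_{i,w}(E) = r_i for all i ∈ 𝒜}. If CB^p(X) ≠ ∅, then for every agent i, P_i(E | B_i^p(CB^p(X))) = r_i. -/
open MeasureTheory Set

/-- In any epistemic probability model with countable state space and all information
cells of positive probability: let `X = {w : P_{i,w}(E) = r i for all i}`. If
`CB^p(X) ≠ ∅`, then for every agent `i`, `P_i(E | B_i^p(CB^p(X))) = r i`. -/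
theorem condP_pBel_comBel_eq {W A : Type*} [MeasurableSpace W] [Nonempty W] [Countable W]
    [Fintype A]
    (P : A → Measure W) [∀ i, IsProbabilityMeasure (P i)]
    (Prt : A → W → Set W)
    (hpart : ∀ i, IsPart (Prt i))
    (hmeas : ∀ i w, MeasurableSet (Prt i w))
    (hpos : ∀ i w, 0 < P i (Prt i w))
    (hBmeas : ∀ (i : A) (q : ℝ), q ∈ Ioc (0 : ℝ) 1 → ∀ F : Set W, MeasurableSet F →
      MeasurableSet (pBel (P i) (Prt i) q F))
    (E : Set W) (hE : MeasurableSet E)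
    (p : ℝ) (hp : p ∈ Ioc (0 : ℝ) 1)
    (r : A → ℝ) (hr : ∀ i, r i ∈ Icc (0 : ℝ) 1)
    (X : Set W) (hX : X = {w | ∀ i, post (P i) (Prt i) E w = r i})
    (hne : (comBel P Prt p X).Nonempty) :
    ∀ i, condP (P i) E (pBel (P i) (Prt i) p (comBel P Prt p X)) = r i := by
  classical
  intro i
  obtain ⟨hp0, hp1⟩ := hp
  have hcelleq : ∀ {w w' : W}, w' ∈ Prt i w → Prt i w' = Prt i w :=
    fun {w w'} h => (hpart i).2 w w' h
  -- post ≥ p > 0 implies positive intersection with the cell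
  have hkey : ∀ (F : Set W) (w : W), p ≤ post (P i) (Prt i) F w → 0 < P i (F ∩ Prt i w) := by
    intro F w hpF
    rcases eq_or_lt_of_le (zero_le : 0 ≤ P i (F ∩ Prt i w)) with h0 | h
    · exfalso
      have h1 : post (P i) (Prt i) F w = 0 := by simp [post, condP, ← h0]
      linarith
    · exact h
  -- membership in a pBel set is determined cellwise
  have hDcell : ∀ (F : Set W) (w : W), w ∈ pBel (P i) (Prt i) p F →
      Prt i w ⊆ pBel (P i) (Prt i) p F := by
    intro F w hw x hx
    have h1 : Prt i x = Prt i w := hcelleq hx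
    simp only [pBel, mem_setOf_eq, post, condP, h1] at hw ⊢
    exact hw
  -- C ⊆ D
  have hCD : comBel P Prt p X ⊆ pBel (P i) (Prt i) p (comBel P Prt p X) := by
    intro w hw
    obtain ⟨Z, hZse, hwZ, hZmut⟩ := hw
    have hZC : Z ⊆ comBel P Prt p X := fun z hz => ⟨Z, hZse, hz, hZmut⟩
    obtain ⟨hposw, hppost⟩ := hZse i hwZ
    refine ⟨hpos i w, le_trans hppost ?_⟩
    unfold post condP
    gcongr
    all_goals first
      | exact measure_ne_top _ _
      | exact measure_mono (inter_subset_inter_left _ hZC)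
  -- posterior of E equals r i throughout D
  have hpost_r : ∀ w ∈ pBel (P i) (Prt i) p (comBel P Prt p X),
      post (P i) (Prt i) E w = r i := by
    intro w hw
    obtain ⟨hposw, hpC⟩ := hw
    obtain ⟨w', hw'⟩ := nonempty_of_measure_ne_zero (hkey _ w hpC).ne'
    obtain ⟨hw'C, hw'c⟩ := hw'
    obtain ⟨Z, hZse, hw'Z, hZmut⟩ := hw'C
    have hw'X : w' ∈ pBel (P i) (Prt i) p X := by
      have hmm := hZmut hw'Z
      exact mem_iInter.mp hmm i
    obtain ⟨hposw', hpX⟩ := hw'X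
    have hceq : Prt i w' = Prt i w := hcelleq hw'c
    have hpXw : p ≤ post (P i) (Prt i) X w := by
      simp only [post, condP, hceq] at hpX
      exact hpX
    obtain ⟨w'', hw''⟩ := nonempty_of_measure_ne_zero (hkey X w hpXw).ne'
    obtain ⟨hw''X, hw''c⟩ := hw''
    have hceq2 : Prt i w'' = Prt i w := hcelleq hw''c
    rw [hX] at hw''X
    have hrw : post (P i) (Prt i) E w'' = r i := hw''X i
    simp only [post, condP, hceq2] at hrw
    exact hrw
  -- set up the quotient by cells
  let S : Setoid W := ⟨fun a b => Prt i a = Prt i b,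
    ⟨fun _ => rfl, fun h => h.symm, fun h1 h2 => h1.trans h2⟩⟩
  let cl : Quotient S → Set W := Quotient.lift (Prt i) (fun _ _ h => h)
  let U : Set (Quotient S) := (Quotient.mk S) '' (pBel (P i) (Prt i) p (comBel P Prt p X))
  have hclmeas : ∀ q, MeasurableSet (cl q) := by
    intro q
    induction q using Quotient.ind with
    | _ a => exact hmeas i a
  have hdisj : U.PairwiseDisjoint cl := by
    rintro q - q' - hne'
    refine Set.disjoint_left.mpr ?_
    induction q using Quotient.ind with
    | _ a =>
      induction q' using Quotient.ind with
      | _ b =>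
        intro x hxa hxb
        exact hne' (Quotient.sound ((hcelleq hxa).symm.trans (hcelleq hxb)))
  have hDunion : pBel (P i) (Prt i) p (comBel P Prt p X) = ⋃ q ∈ U, cl q := by
    apply subset_antisymm
    · intro w hw
      exact mem_biUnion ⟨w, hw, rfl⟩ ((hpart i).1 w)
    · intro x hx
      simp only [mem_iUnion] at hx
      obtain ⟨q, hqU, hxq⟩ := hx
      obtain ⟨a, haD, rfl⟩ := hqU
      exact hDcell _ a haD hxq
  have hU_count : U.Countable := U.to_countable
  have hPD : P i (pBel (P i) (Prt i) p (comBel P Prt p X)) = ∑' q : U, P i (cl q) := by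
    rw [hDunion]
    exact measure_biUnion hU_count hdisj (fun q _ => hclmeas q)
  have hPED : P i (E ∩ pBel (P i) (Prt i) p (comBel P Prt p X))
      = ∑' q : U, P i (E ∩ cl q) := by
    rw [hDunion, inter_iUnion₂]
    exact measure_biUnion hU_count
      (fun q hq q' hq' hne' => ((hdisj hq hq' hne').mono inter_subset_right inter_subset_right))
      (fun q _ => hE.inter (hclmeas q))
  have hcellE : ∀ q ∈ U, P i (E ∩ cl q) = ENNReal.ofReal (r i) * P i (cl q) := by
    rintro q ⟨a, haD, rfl⟩
    have hra := hpost_r a haD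
    have hbne : P i (Prt i a) ≠ 0 := (hpos i a).ne'
    have hbfin : P i (Prt i a) ≠ ⊤ := measure_ne_top _ _
    have hbpos : 0 < (P i (Prt i a)).toReal := ENNReal.toReal_pos hbne hbfin
    have hnum : (P i (E ∩ Prt i a)).toReal = r i * (P i (Prt i a)).toReal := by
      unfold post condP at hra
      rw [div_eq_iff hbpos.ne'] at hra
      exact hra
    show P i (E ∩ Prt i a) = ENNReal.ofReal (r i) * P i (Prt i a)
    calc P i (E ∩ Prt i a)
        = ENNReal.ofReal ((P i (E ∩ Prt i a)).toReal) :=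
          (ENNReal.ofReal_toReal (measure_ne_top _ _)).symm
      _ = ENNReal.ofReal (r i * (P i (Prt i a)).toReal) := by rw [hnum]
      _ = ENNReal.ofReal (r i) * ENNReal.ofReal ((P i (Prt i a)).toReal) :=
          ENNReal.ofReal_mul (hr i).1
      _ = ENNReal.ofReal (r i) * P i (Prt i a) := by rw [ENNReal.ofReal_toReal hbfin]
  have hmain : P i (E ∩ pBel (P i) (Prt i) p (comBel P Prt p X))
      = ENNReal.ofReal (r i) * P i (pBel (P i) (Prt i) p (comBel P Prt p X)) := by
    rw [hPED, hPD, ← ENNReal.tsum_mul_left]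
    exact tsum_congr (fun q => hcellE q q.2)
  obtain ⟨w0, hw0⟩ := hne
  have hw0D := hCD hw0
  have hPDpos : 0 < P i (pBel (P i) (Prt i) p (comBel P Prt p X)) :=
    lt_of_lt_of_le (hpos i w0) (measure_mono (hDcell _ w0 hw0D))
  have hPDfin : P i (pBel (P i) (Prt i) p (comBel P Prt p X)) ≠ ⊤ := measure_ne_top _ _
  have htpos : 0 < (P i (pBel (P i) (Prt i) p (comBel P Prt p X))).toReal :=
    ENNReal.toReal_pos hPDpos.ne' hPDfin
  unfold condP
  rw [hmain, ENNReal.toReal_mul, ENNReal.toReal_ofReal (hr i).1, mul_div_assoc,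
    div_self htpos.ne', mul_one]
end

section
/- Monderer–Samet–Neeman Theorem: Let ⟨W, (Π_i)_{i∈𝒜}, 𝓕, P⟩ be an epistemic probability model with a common prior P, assume W is countable and P(Π_i(w)) > 0 for every agent i and state w, let E ∈ 𝓕, p ∈ (0,1], and for each agent i let r_i ∈ [0,1]. If CB^p({w : P_{i,w}(E) = r_i for all i ∈ 𝒜}) is nonempty, then |r_i − r_j| ≤ 1 − p for all agents i, j ∈ 𝒜. -/
open MeasureTheory Set

/-- Lift a real inequality between scaled measures to `ℝ≥0∞`. -/
lemma msn_lift_ineq {a b : ℝ} (ha : 0 ≤ a) (hb : 0 ≤ b) {μ ν : ENNReal} (hμ : μ ≠ ⊤) (hν : ν ≠ ⊤)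
    (h : a * μ.toReal ≤ b * ν.toReal) : ENNReal.ofReal a * μ ≤ ENNReal.ofReal b * ν := by
  rw [← ENNReal.ofReal_toReal hμ, ← ENNReal.ofReal_toReal hν, ← ENNReal.ofReal_mul ha,
    ← ENNReal.ofReal_mul hb]
  exact ENNReal.ofReal_le_ofReal h

/-- A countable partition decomposes the (outer) measure of any set. -/
lemma msn_cell_sum {W : Type u} [MeasurableSpace W] [Countable W] (P : Measure W)
    (Prt : W → Set W) (hpart : IsPart Prt) (hmeas : ∀ w, MeasurableSet (Prt w)) :
    ∃ (ι : Type u) (_ : Countable ι) (C : ι → Set W),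
      (∀ q, ∃ w, C q = Prt w) ∧ ∀ T : Set W, P T = ∑' q, P (C q ∩ T) := by
  let s : Setoid W := ⟨fun a b => Prt a = Prt b, ⟨fun _ => rfl, Eq.symm, Eq.trans⟩⟩
  refine ⟨Quotient s, inferInstance, Quotient.lift Prt (fun a b h => h), ?_, ?_⟩
  · exact fun q => Quotient.inductionOn q fun w => ⟨w, rfl⟩
  · intro T
    have hdisj : Pairwise (Function.onFun Disjoint (Quotient.lift Prt (fun a b h => h))) := by
      intro q q' hne
      induction q using Quotient.ind with | _ a => ?_
      induction q' using Quotient.ind with | _ b => ?_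
      refine Set.disjoint_left.mpr fun x hxa hxb => hne ?_
      have : Prt a = Prt b := ((hpart.2 a x hxa).symm.trans (hpart.2 b x hxb))
      exact Quotient.sound this
    have hmeasC : ∀ q : Quotient s, MeasurableSet (Quotient.lift Prt (fun a b h => h) q) :=
      fun q => Quotient.inductionOn q fun w => hmeas w
    have hcover : ⋃ q, Quotient.lift Prt (fun a b h => h) q = univ := by
      refine eq_univ_iff_forall.mpr fun x => mem_iUnion.mpr ⟨Quotient.mk s x, hpart.1 x⟩
    have h := measure_iUnion (μ := P.restrict T) hdisj hmeasC
    rw [hcover] at h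
    have h1 : P.restrict T univ = P T := by
      rw [Measure.restrict_apply MeasurableSet.univ, univ_inter]
    rw [h1] at h
    rw [h]
    exact tsum_congr fun q => Measure.restrict_apply (hmeasC q)


/-- **Monderer–Samet–Neeman Theorem.** In an epistemic probability model with a common
prior `P`, countable state space and all information cells of positive probability:
if the posteriors `(r i)` of an event `E` are common `p`-belief, then
`|r i − r j| ≤ 1 − p` for all agents `i, j`. -/

theorem msn_theorem {W A : Type*} [MeasurableSpace W] [Nonempty W] [Countable W]
    [Fintype A]
    (P : Measure W) [IsProbabilityMeasure P]
    (Prt : A → W → Set W)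
    (hpart : ∀ i, IsPart (Prt i))
    (hmeas : ∀ i w, MeasurableSet (Prt i w))
    (hpos : ∀ i w, 0 < P (Prt i w))
    (hBmeas : ∀ (i : A) (q : ℝ), q ∈ Ioc (0 : ℝ) 1 → ∀ F : Set W, MeasurableSet F →
      MeasurableSet (pBel P (Prt i) q F))
    (E : Set W) (hE : MeasurableSet E)
    (p : ℝ) (hp : p ∈ Ioc (0 : ℝ) 1)
    (r : A → ℝ) (hr : ∀ i, r i ∈ Icc (0 : ℝ) 1)
    (hcb : (comBel (fun _ : A => P) Prt p {w | ∀ i, post P (Prt i) E w = r i}).Nonempty) :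
    ∀ i j, |r i - r j| ≤ 1 - p := by
  have hp0 : 0 < p := hp.1
  have hp1 : p ≤ 1 := hp.2
  set F : Set W := {w | ∀ i, post P (Prt i) E w = r i} with hF
  obtain ⟨w₀, Z, hZse, hw₀Z, hZmut⟩ := hcb
  have hfin : ∀ S : Set W, P S ≠ ⊤ := fun S => measure_ne_top P S
  have hPCpos : ∀ (k : A) (w : W), 0 < (P (Prt k w)).toReal :=
    fun k w => ENNReal.toReal_pos (hpos k w).ne' (measure_ne_top P _)
  have cellZ : ∀ (k : A), ∀ w ∈ Z, p * (P (Prt k w)).toReal ≤ (P (Z ∩ Prt k w)).toReal := by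
    intro k w hw
    have h := hZse k hw
    simp only [pBel, mem_setOf_eq, post, condP] at h
    exact (le_div_iff₀ (hPCpos k w)).mp h.2
  have cellE : ∀ (k : A), ∀ w ∈ Z, (P (E ∩ Prt k w)).toReal = r k * (P (Prt k w)).toReal := by
    intro k w hw
    have h := hZmut hw
    simp only [mutBel, mem_iInter, pBel, mem_setOf_eq, post, condP] at h
    have hFC : p * (P (Prt k w)).toReal ≤ (P (F ∩ Prt k w)).toReal :=
      (le_div_iff₀ (hPCpos k w)).mp (h k).2
    have hne : (F ∩ Prt k w).Nonempty := by
      by_contra hc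
      rw [not_nonempty_iff_eq_empty] at hc
      rw [hc] at hFC
      simp only [measure_empty, ENNReal.toReal_zero] at hFC
      nlinarith [hPCpos k w]
    obtain ⟨w', hw'F, hw'C⟩ := hne
    have hCC : Prt k w' = Prt k w := (hpart k).2 w w' hw'C
    have hpost := hw'F k
    simp only [post, condP, hCC] at hpost
    exact (div_eq_iff (hPCpos k w).ne').mp hpost
  have cellUpper : ∀ (k : A) (w : W),
      ENNReal.ofReal p * P (Prt k w ∩ (E ∩ Z)) ≤ ENNReal.ofReal (r k) * P (Prt k w ∩ Z) := by
    intro k w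
    rcases (Z ∩ Prt k w).eq_empty_or_nonempty with hempty | ⟨w', hw'Z, hw'C⟩
    · have h0 : Prt k w ∩ (E ∩ Z) = ∅ := by
        rw [eq_empty_iff_forall_notMem] at hempty ⊢
        exact fun x hx => hempty x ⟨hx.2.2, hx.1⟩
      rw [h0]
      simp
    · have hCC : Prt k w' = Prt k w := (hpart k).2 w w' hw'C
      refine msn_lift_ineq hp0.le (hr k).1 (hfin _) (hfin _) ?_
      have h1 := cellZ k w' hw'Z
      have h2 := cellE k w' hw'Z
      rw [hCC] at h1 h2
      have hm : (P (Prt k w ∩ (E ∩ Z))).toReal ≤ (P (E ∩ Prt k w)).toReal :=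
        ENNReal.toReal_mono (hfin _) (measure_mono fun x hx => ⟨hx.2.1, hx.1⟩)
      rw [Set.inter_comm (Prt k w) Z]
      nlinarith [hPCpos k w, (hr k).1, ENNReal.toReal_nonneg (a := P (Prt k w ∩ (E ∩ Z)))]
  have cellLower : ∀ (k : A) (w : W),
      ENNReal.ofReal (r k + p - 1) * P (Prt k w ∩ Z) ≤
        ENNReal.ofReal p * P (Prt k w ∩ (E ∩ Z)) := by
    intro k w
    rcases le_or_gt (r k + p - 1) 0 with hc | hc
    · rw [ENNReal.ofReal_eq_zero.mpr hc, zero_mul]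
      exact zero_le
    rcases (Z ∩ Prt k w).eq_empty_or_nonempty with hempty | ⟨w', hw'Z, hw'C⟩
    · rw [Set.inter_comm (Prt k w) Z, hempty]
      simp
    · have hCC : Prt k w' = Prt k w := (hpart k).2 w w' hw'C
      refine msn_lift_ineq hc.le hp0.le (hfin _) (hfin _) ?_
      have h1 := cellZ k w' hw'Z
      have h2 := cellE k w' hw'Z
      rw [hCC] at h1 h2
      have hie := measure_union_add_inter (μ := P) (Z ∩ Prt k w) (hE.inter (hmeas k w))
      have hsets : (Z ∩ Prt k w) ∩ (E ∩ Prt k w) = Prt k w ∩ (E ∩ Z) := by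
        ext x; constructor
        · rintro ⟨⟨hz, hc1⟩, he, -⟩; exact ⟨hc1, he, hz⟩
        · rintro ⟨hc1, he, hz⟩; exact ⟨⟨hz, hc1⟩, he, hc1⟩
      rw [hsets] at hie
      have hieR : (P ((Z ∩ Prt k w) ∪ (E ∩ Prt k w))).toReal
          + (P (Prt k w ∩ (E ∩ Z))).toReal
          = (P (Z ∩ Prt k w)).toReal + (P (E ∩ Prt k w)).toReal := by
        rw [← ENNReal.toReal_add (hfin _) (hfin _), ← ENNReal.toReal_add (hfin _) (hfin _), hie]
      have hu : (P ((Z ∩ Prt k w) ∪ (E ∩ Prt k w))).toReal ≤ (P (Prt k w)).toReal :=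
        ENNReal.toReal_mono (hfin _) (measure_mono (by
          rintro x (⟨-, hx⟩ | ⟨-, hx⟩) <;> exact hx))
      rw [Set.inter_comm (Prt k w) Z]
      nlinarith [hPCpos k w, (hr k).2, (hr k).1,
        mul_nonneg (sub_nonneg.mpr (hr k).2) (sub_nonneg.mpr h1)]
  have main : ∀ a b : A, r a + p - 1 ≤ r b := by
    intro a b
    obtain ⟨ιa, hιa, Ca, hCa, hsa⟩ := msn_cell_sum P (Prt a) (hpart a) (hmeas a)
    haveI := hιa
    obtain ⟨ιb, hιb, Cb, hCb, hsb⟩ := msn_cell_sum P (Prt b) (hpart b) (hmeas b)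
    haveI := hιb
    have hL : ENNReal.ofReal (r a + p - 1) * P Z ≤ ENNReal.ofReal p * P (E ∩ Z) := by
      rw [hsa Z, hsa (E ∩ Z), ← ENNReal.tsum_mul_left, ← ENNReal.tsum_mul_left]
      refine ENNReal.tsum_le_tsum fun q => ?_
      obtain ⟨w, hw⟩ := hCa q
      rw [hw]
      exact cellLower a w
    have hU : ENNReal.ofReal p * P (E ∩ Z) ≤ ENNReal.ofReal (r b) * P Z := by
      rw [hsb Z, hsb (E ∩ Z), ← ENNReal.tsum_mul_left, ← ENNReal.tsum_mul_left]
      refine ENNReal.tsum_le_tsum fun q => ?_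
      obtain ⟨w, hw⟩ := hCb q
      rw [hw]
      exact cellUpper b w
    have hZ0 : P Z ≠ 0 := by
      have h1 := cellZ b w₀ hw₀Z
      have hz0 : 0 < (P (Z ∩ Prt b w₀)).toReal :=
        lt_of_lt_of_le (mul_pos hp0 (hPCpos b w₀)) h1
      have hne : P (Z ∩ Prt b w₀) ≠ 0 := fun h => by simp [h] at hz0
      exact fun h0 => hne (le_antisymm (h0 ▸ measure_mono inter_subset_left) zero_le)
    have hfinal := hL.trans hU
    rw [ENNReal.mul_le_mul_iff_left hZ0 (hfin Z)] at hfinal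
    have := (ENNReal.ofReal_le_ofReal_iff (hr b).1).mp hfinal
    linarith
  intro i j
  rw [abs_sub_le_iff]
  exact ⟨by linarith [main i j], by linarith [main j i]⟩
end

section
/- Let ⟨W, (Π_i)_{i∈𝒜}, 𝓕, P⟩ be an epistemic probability model with a common prior P, assume W is countable and P(Π_i(w)) > 0 for every agent i and state w, and let E, X ∈ 𝓕 and p ∈ (0,1] with CB^p(X) ≠ ∅. Then for all agents i, j, either both (1) P(CB^p(X) ∖ E | B_i^p(CB^p(X))) ≤ P(CB^p(X) ∖ E | B_j^p(CB^p(X))) and (2) P(E ∩ CB^p(X) | B_i^p(CB^p(X))) ≤ P(E ∩ CB^p(X) | B_j^p(CB^p(X))), or both of the reverse inequalities (3) and (4) hold. -/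
open MeasureTheory Set

/-- In an epistemic probability model with a common prior `P`, countable state space and
all information cells of positive probability: if `CB^p(X) ≠ ∅`, then for all agents
`i, j`, either both `P(CB^p(X) ∖ E | B_i^p(CB^p(X))) ≤ P(CB^p(X) ∖ E | B_j^p(CB^p(X)))`
and `P(E ∩ CB^p(X) | B_i^p(CB^p(X))) ≤ P(E ∩ CB^p(X) | B_j^p(CB^p(X)))`, or both
reverse inequalities hold. -/
theorem comparison_lemma {W A : Type*} [MeasurableSpace W] [Nonempty W] [Countable W]
    [Fintype A]
    (P : Measure W) [IsProbabilityMeasure P]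
    (Prt : A → W → Set W)
    (hpart : ∀ i, IsPart (Prt i))
    (hmeas : ∀ i w, MeasurableSet (Prt i w))
    (hpos : ∀ i w, 0 < P (Prt i w))
    (hBmeas : ∀ (i : A) (q : ℝ), q ∈ Ioc (0 : ℝ) 1 → ∀ F : Set W, MeasurableSet F →
      MeasurableSet (pBel P (Prt i) q F))
    (E X : Set W) (hE : MeasurableSet E) (hX : MeasurableSet X)
    (p : ℝ) (hp : p ∈ Ioc (0 : ℝ) 1)
    (hcb : (comBel (fun _ : A => P) Prt p X).Nonempty) :
    ∀ i j : A,
      (condP P (comBel (fun _ : A => P) Prt p X \ E)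
          (pBel P (Prt i) p (comBel (fun _ : A => P) Prt p X))
        ≤ condP P (comBel (fun _ : A => P) Prt p X \ E)
          (pBel P (Prt j) p (comBel (fun _ : A => P) Prt p X)) ∧
       condP P (E ∩ comBel (fun _ : A => P) Prt p X)
          (pBel P (Prt i) p (comBel (fun _ : A => P) Prt p X))
        ≤ condP P (E ∩ comBel (fun _ : A => P) Prt p X)
          (pBel P (Prt j) p (comBel (fun _ : A => P) Prt p X)))
      ∨
      (condP P (comBel (fun _ : A => P) Prt p X \ E)
          (pBel P (Prt j) p (comBel (fun _ : A => P) Prt p X))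
        ≤ condP P (comBel (fun _ : A => P) Prt p X \ E)
          (pBel P (Prt i) p (comBel (fun _ : A => P) Prt p X)) ∧
       condP P (E ∩ comBel (fun _ : A => P) Prt p X)
          (pBel P (Prt j) p (comBel (fun _ : A => P) Prt p X))
        ≤ condP P (E ∩ comBel (fun _ : A => P) Prt p X)
          (pBel P (Prt i) p (comBel (fun _ : A => P) Prt p X))) := by

  classical
  set C := comBel (fun _ : A => P) Prt p X with hC
  -- C is contained in every agent's p-belief of C
  have hCsub : ∀ i : A, C ⊆ pBel P (Prt i) p C := by
    intro i w hw
    obtain ⟨Z, hZse, hwZ, hZmut⟩ := hw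
    have hZC : Z ⊆ C := fun z hz => ⟨Z, hZse, hz, hZmut⟩
    obtain ⟨hPipos, hle⟩ := hZse i hwZ
    refine ⟨hPipos, le_trans hle ?_⟩
    unfold post condP
    gcongr <;> first
      | exact measure_ne_top P _
      | exact measure_mono (inter_subset_inter_left _ hZC)
  intro i j
  -- P(C) > 0
  have hCpos : 0 < P C := by
    obtain ⟨w, hw⟩ := hcb
    obtain ⟨hPipos, hle⟩ := hCsub i hw
    have hpost : 0 < post P (Prt i) C w := lt_of_lt_of_le hp.1 hle
    have hnum : P (C ∩ Prt i w) ≠ 0 := by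
      intro h0
      rw [post, condP, h0] at hpost
      simp at hpost
    exact lt_of_lt_of_le (pos_iff_ne_zero.mpr hnum) (measure_mono inter_subset_left)
  have hBpos : ∀ k : A, 0 < (P (pBel P (Prt k) p C)).toReal := by
    intro k
    have h1 : 0 < P (pBel P (Prt k) p C) := lt_of_lt_of_le hCpos (measure_mono (hCsub k))
    exact ENNReal.toReal_pos h1.ne' (measure_ne_top P _)
  have hcond : ∀ (k : A) (S : Set W), S ⊆ C →
      condP P S (pBel P (Prt k) p C) = (P S).toReal / (P (pBel P (Prt k) p C)).toReal := by
    intro k S hS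
    rw [condP, inter_eq_left.mpr (hS.trans (hCsub k))]
  have key : ∀ k l : A, (P (pBel P (Prt l) p C)).toReal ≤ (P (pBel P (Prt k) p C)).toReal →
      ∀ S : Set W, S ⊆ C →
      condP P S (pBel P (Prt k) p C) ≤ condP P S (pBel P (Prt l) p C) := by
    intro k l hkl S hS
    rw [hcond k S hS, hcond l S hS]
    gcongr <;> first
      | exact ENNReal.toReal_nonneg
      | exact hBpos l
      | exact hkl
  rcases le_total (P (pBel P (Prt j) p C)).toReal (P (pBel P (Prt i) p C)).toReal with h | h
  · exact Or.inl ⟨key i j h _ diff_subset, key i j h _ inter_subset_right⟩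
  · exact Or.inr ⟨key j i h _ diff_subset, key j i h _ inter_subset_right⟩
end

section
/- (CP6)–(CP7) do not imply the existence of a multiplication satisfying (M3): Let W = {w₁, w₂, w₃}, 𝓕 = the powerset of W, 𝓕′ = the nonempty subsets of W, and let p be the probability measure with p(w₁) = p(w₂) = 0.25 and p(w₃) = 0.5. Define p′(A|B) to equal 0.26 if A = {w₁} and B = W; 0.24 if A = {w₂} and B = W; 0.76 if A = {w₁,w₃} and B = W; 0.74 if A = {w₂,w₃} and B = W; and p(A∩B)/p(B) otherwise. Then p′({w₁} | {w₁,w₂}) = p′({w₂} | {w₁,w₂}) while p′({w₁} | W) ≠ p′({w₂} | W); consequently, there is no partial function ⊗ : [0,1] × [0,1] → [0,1] such that for all X ∈ 𝓕 and nonempty Y, Z with X ⊆ Y ⊆ Z, p′(X|Z) = p′(X|Y) ⊗ p′(Y|Z). -/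
open Set

/-- The prior `p`: `p(w₁) = p(w₂) = 0.25`, `p(w₃) = 0.5`. -/
noncomputable def pwt18 : Fin 3 → ℝ := ![0.25, 0.25, 0.5]

open scoped Classical in
/-- Conditional probability `p(A|B) = p(A∩B)/p(B)`. -/
noncomputable def cond18 (A B : Set (Fin 3)) : ℝ :=
  (∑ w : Fin 3, if w ∈ A ∩ B then pwt18 w else 0) /
    (∑ w : Fin 3, if w ∈ B then pwt18 w else 0)

open scoped Classical in
/-- The perturbed conditional plausibility measure `p′`. -/
noncomputable def p' (A B : Set (Fin 3)) : ℝ :=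
  if A = ({0} : Set (Fin 3)) ∧ B = (univ : Set (Fin 3)) then 0.26
  else if A = ({1} : Set (Fin 3)) ∧ B = (univ : Set (Fin 3)) then 0.24
  else if A = ({0, 2} : Set (Fin 3)) ∧ B = (univ : Set (Fin 3)) then 0.76
  else if A = ({1, 2} : Set (Fin 3)) ∧ B = (univ : Set (Fin 3)) then 0.74
  else cond18 A B

/-- **(CP6)–(CP7) do not imply the existence of a multiplication satisfying (M3).**
We have `p′({w₁} | {w₁,w₂}) = p′({w₂} | {w₁,w₂})` while `p′({w₁} | W) ≠ p′({w₂} | W)`;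
consequently there is no (partial) multiplication `⊗` such that
`p′(X|Z) = p′(X|Y) ⊗ p′(Y|Z)` for all `X ⊆ Y ⊆ Z` with `Y, Z` nonempty. -/
theorem cp6_cp7_do_not_imply_multiplication :
    p' {0} {0, 1} = p' {1} {0, 1} ∧
    p' {0} univ ≠ p' {1} univ ∧
    ¬ ∃ mul : ℝ → ℝ → ℝ, ∀ X Y Z : Set (Fin 3),
        X ⊆ Y → Y ⊆ Z → Y.Nonempty → Z.Nonempty →
        p' X Z = mul (p' X Y) (p' Y Z) := by
  have hset : ∀ A B : Set (Fin 3), A ≠ {0} ∨ B ≠ univ → A ≠ {1} ∨ B ≠ univ →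
      A ≠ {0,2} ∨ B ≠ univ → A ≠ {1,2} ∨ B ≠ univ → p' A B = cond18 A B := by
    intro A B h1 h2 h3 h4
    simp only [p']
    rw [if_neg, if_neg, if_neg, if_neg] <;> tauto
  have hBne : ({0,1} : Set (Fin 3)) ≠ univ := by
    intro h
    have : (2 : Fin 3) ∈ ({0,1} : Set (Fin 3)) := h ▸ mem_univ _
    simp at this
  have h1 : p' {0} {0,1} = 0.5 := by
    rw [hset _ _ (Or.inr hBne) (Or.inr hBne) (Or.inr hBne) (Or.inr hBne)]
    simp [cond18, Fin.sum_univ_three, pwt18]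
    norm_num
  have h2 : p' {1} {0,1} = 0.5 := by
    rw [hset _ _ (Or.inr hBne) (Or.inr hBne) (Or.inr hBne) (Or.inr hBne)]
    simp [cond18, Fin.sum_univ_three, pwt18]
    norm_num
  have h3 : p' {0} univ = 0.26 := by
    simp only [p']; rw [if_pos (by simp)]
  have h4 : p' {1} univ = 0.24 := by
    simp only [p']
    rw [if_neg, if_pos (by simp)]
    rintro ⟨h, -⟩
    have : (1 : Fin 3) ∈ ({0} : Set (Fin 3)) := h ▸ (by simp)
    simp at this
  have hne01 : ∀ w : Fin 3, w ∉ ({0,1} : Set (Fin 3)) ∨ w ∈ ({0,1} : Set (Fin 3)) := fun w => em' _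
  have h5 : p' {0,1} univ = 0.5 := by
    have ne1 : ({0,1} : Set (Fin 3)) ≠ {0} := by
      intro h
      have : (1 : Fin 3) ∈ ({0} : Set (Fin 3)) := h ▸ (by simp)
      simp at this
    have ne2 : ({0,1} : Set (Fin 3)) ≠ {1} := by
      intro h
      have : (0 : Fin 3) ∈ ({1} : Set (Fin 3)) := h ▸ (by simp)
      simp at this
    have ne3 : ({0,1} : Set (Fin 3)) ≠ {0,2} := by
      intro h
      have : (1 : Fin 3) ∈ ({0,2} : Set (Fin 3)) := h ▸ (by simp)
      simp at this
    have ne4 : ({0,1} : Set (Fin 3)) ≠ {1,2} := by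
      intro h
      have : (0 : Fin 3) ∈ ({1,2} : Set (Fin 3)) := h ▸ (by simp)
      simp at this
    rw [hset _ _ (Or.inl ne1) (Or.inl ne2) (Or.inl ne3) (Or.inl ne4)]
    simp [cond18, Fin.sum_univ_three, pwt18]
    norm_num
  refine ⟨h1.trans h2.symm, by rw [h3, h4]; norm_num, ?_⟩
  rintro ⟨mul, hmul⟩
  have ha := hmul {0} {0,1} univ (by intro x hx; simp at hx; simp [hx]) (subset_univ _)
    ⟨0, by simp⟩ ⟨0, mem_univ _⟩
  have hb := hmul {1} {0,1} univ (by intro x hx; simp at hx; simp [hx]) (subset_univ _)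
    ⟨0, by simp⟩ ⟨0, mem_univ _⟩
  rw [h1, h3, h5] at ha
  rw [h2, h4, h5] at hb
  rw [← ha] at hb
  norm_num at hb
end
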